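/- Let β > 0 be irrational. Then the block averages of δ*_n tend to zero uniformly: for every ε > 0 there exists N₀ ∈ N such that for all integers m and all N > N₀, |(1/N)·∑_{n=mN+1}^{(m+1)N} δ*_n| < ε. -/

import Mathlib

/-!
Since `δ*ₙ = (1/2 - {βn + 1/2}) / β`, a block average of `δ*` is `-1/β` times an average of the
sawtooth `{c + jβ} - 1/2` along an orbit of the rotation by `β`, and these averages must tend to `0`
uniformly in the starting point `c`.

The sawtooth is discontinuous, but the continuous `1`-periodic function `P x = {x} (1 - {x})`
satisfies, for `0 ≤ η < 1`, the discrete sandwich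
`P a - P (a + η) - η² ≤ 2η ({a} - 1/2)` and `2η ({a + η} - 1/2) ≤ P a - P (a + η) + η²`.
Summing along the orbit, it suffices that the Birkhoff sums of `P` depend on the starting point
only up to `o(N)`, uniformly. This property is linear and closed under uniform limits; it holds for
every character `e_k`, whose Birkhoff sums are geometric sums of `e_k(β) ≠ 1` when `k ≠ 0`, hence
for every continuous function on the circle by density of trigonometric polynomials.
-/

/-- The perturbations `δ*_n` associated with `β`. -/
noncomputable def deltaStar (β : ℝ) (n : ℤ) : ℝ :=
  if (1/2 : ℝ) ≤ Int.fract (β * (n : ℝ)) then ((⌊β * (n : ℝ)⌋ : ℝ) + 1) / β - n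
  else (⌊β * (n : ℝ)⌋ : ℝ) / β - n

open Filter Finset

section Oscillation

variable {α E : Type*} [NormedAddCommGroup E]

def HasSublinearBirkhoffOscillation (f : α → α) (g : α → E) : Prop :=
  ∀ ε > 0, ∀ᶠ n : ℕ in atTop, ∀ x y, dist (birkhoffSum f g n x) (birkhoffSum f g n y) ≤ ε * n

namespace HasSublinearBirkhoffOscillation

variable {f : α → α} {g g' : α → E}

lemma of_dist_le (C : ℝ) (h : ∀ n x y, dist (birkhoffSum f g n x) (birkhoffSum f g n y) ≤ C) :
    HasSublinearBirkhoffOscillation f g := fun ε hε ↦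
  (tendsto_natCast_atTop_atTop.eventually_ge_atTop (C / ε)).mono fun n hn x y ↦
    (h n x y).trans <| by rwa [div_le_iff₀' hε] at hn

lemma add (hg : HasSublinearBirkhoffOscillation f g) (hg' : HasSublinearBirkhoffOscillation f g') :
    HasSublinearBirkhoffOscillation f (g + g') := fun ε hε ↦ by
  filter_upwards [hg (ε / 2) (by positivity), hg' (ε / 2) (by positivity)] with n hn hn' x y
  rw [birkhoffSum_add', birkhoffSum_add']
  linarith [dist_add_add_le (birkhoffSum f g n x) (birkhoffSum f g' n x) (birkhoffSum f g n y)
    (birkhoffSum f g' n y), hn x y, hn' x y]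

lemma const_smul {𝕜 : Type*} [NormedField 𝕜] [NormedSpace 𝕜 E] (a : 𝕜)
    (hg : HasSublinearBirkhoffOscillation f g) : HasSublinearBirkhoffOscillation f (a • g) := by
  intro ε hε
  filter_upwards [hg (ε / (‖a‖ + 1)) (by positivity)] with n hn x y
  have hsmul : ∀ z, birkhoffSum f (a • g) n z = a • birkhoffSum f g n z := fun z ↦ by
    simp only [birkhoffSum, Pi.smul_apply, smul_sum]
  rw [hsmul, hsmul, dist_smul₀]
  calc ‖a‖ * dist (birkhoffSum f g n x) (birkhoffSum f g n y)
      ≤ (‖a‖ + 1) * (ε / (‖a‖ + 1) * n) :=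
        mul_le_mul (by linarith) (hn x y) dist_nonneg (by positivity)
    _ = ε * n := by field_simp

lemma of_forall_dist_le
    (h : ∀ δ > 0, ∃ g', HasSublinearBirkhoffOscillation f g' ∧ ∀ x, dist (g x) (g' x) ≤ δ) :
    HasSublinearBirkhoffOscillation f g := by
  intro ε hε
  obtain ⟨g', hg', hgg'⟩ := h (ε / 3) (by positivity)
  have hclose : ∀ n x, dist (birkhoffSum f g n x) (birkhoffSum f g' n x) ≤ ε / 3 * n := by
    intro n x
    calc _ ≤ ∑ k ∈ range n, dist (g (f^[k] x)) (g' (f^[k] x)) := dist_sum_sum_le _ _ _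
      _ ≤ ∑ k ∈ range n, ε / 3 := sum_le_sum fun k _ ↦ hgg' _
      _ = ε / 3 * n := by simp [mul_comm]
  filter_upwards [hg' (ε / 3) (by positivity)] with n hn x y
  linarith [dist_triangle4 (birkhoffSum f g n x) (birkhoffSum f g' n x) (birkhoffSum f g' n y)
    (birkhoffSum f g n y), hclose n x, hclose n y, hn x y,
    dist_comm (birkhoffSum f g n y) (birkhoffSum f g' n y)]

end HasSublinearBirkhoffOscillation

end Oscillation

section Submodule

variable (𝕜 : Type*) {X E : Type*} [NormedField 𝕜] [NormedAddCommGroup E] [NormedSpace 𝕜 E]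
  [TopologicalSpace X] [CompactSpace X]

def sublinearBirkhoffOscillationSubmodule (f : X → X) : Submodule 𝕜 C(X, E) where
  carrier := {g | HasSublinearBirkhoffOscillation f g}
  zero_mem' := .of_dist_le 0 fun n x y ↦ by simp [birkhoffSum]
  add_mem' := .add
  smul_mem' a _ hg := hg.const_smul a

variable {𝕜}

lemma isClosed_sublinearBirkhoffOscillationSubmodule (f : X → X) :
    IsClosed ((sublinearBirkhoffOscillationSubmodule 𝕜 f : Submodule 𝕜 C(X, E)) : Set C(X, E)) := by
  refine isClosed_of_closure_subset fun g hg ↦ ?_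
  refine HasSublinearBirkhoffOscillation.of_forall_dist_le fun δ hδ ↦ ?_
  obtain ⟨g', hg', hgg'⟩ := Metric.mem_closure_iff.1 hg δ hδ
  exact ⟨g', hg', fun x ↦ (ContinuousMap.dist_apply_le_dist x).trans hgg'.le⟩

end Submodule

lemma norm_geom_sum_le_of_norm_le_one {K : Type*} [NormedField K] {z : K} (hz : ‖z‖ ≤ 1)
    (hz1 : z ≠ 1) (n : ℕ) : ‖∑ j ∈ range n, z ^ j‖ ≤ 2 / ‖z - 1‖ := by
  rw [geom_sum_eq hz1, norm_div]
  gcongr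
  calc ‖z ^ n - 1‖ ≤ ‖z ^ n‖ + ‖(1 : K)‖ := norm_sub_le _ _
    _ ≤ 2 := by rw [norm_pow, norm_one]; linarith [pow_le_one₀ (norm_nonneg z) hz (n := n)]

section Rotation

open AddCircle

variable {T : ℝ}

lemma birkhoffSum_add_fourier (β x : AddCircle T) (k : ℤ) (n : ℕ) :
    birkhoffSum (· + β) (fourier k) n x = fourier k x * ∑ j ∈ range n, fourier k β ^ j := by
  simp only [birkhoffSum, add_right_iterate_apply, mul_sum, fourier_apply, smul_add, toCircle_add,
    Circle.coe_mul, smul_comm k, toCircle_nsmul, Circle.coe_pow]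

lemma fourier_ne_one_of_addOrderOf_eq_zero [Fact (0 < T)] {β : AddCircle T}
    (hβ : addOrderOf β = 0) {k : ℤ} (hk : k ≠ 0) : fourier k β ≠ 1 := by
  rw [fourier_apply, ne_eq, Circle.coe_eq_one, ← toCircle_zero,
    (injective_toCircle (Fact.out : 0 < T).ne').eq_iff]
  exact fun h ↦ addOrderOf_eq_zero_iff'.1 hβ k.natAbs (by omega) (by simpa using h)

lemma hasSublinearBirkhoffOscillation_fourier [Fact (0 < T)] {β : AddCircle T}
    (hβ : addOrderOf β = 0) (k : ℤ) : HasSublinearBirkhoffOscillation (· + β) (fourier k) := by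
  rcases eq_or_ne k 0 with rfl | hk
  · exact .of_dist_le 0 fun n x y ↦ by simp [birkhoffSum_add_fourier]
  refine .of_dist_le (2 * (2 / ‖fourier k β - 1‖)) fun n x y ↦ ?_
  rw [birkhoffSum_add_fourier, birkhoffSum_add_fourier, dist_eq_norm, ← sub_mul, norm_mul]
  gcongr
  · exact (norm_sub_le _ _).trans (by simp [fourier_apply, Circle.norm_coe]; norm_num)
  · exact norm_geom_sum_le_of_norm_le_one (by simp [fourier_apply, Circle.norm_coe])
      (fourier_ne_one_of_addOrderOf_eq_zero hβ hk) n

theorem hasSublinearBirkhoffOscillation_rotation [Fact (0 < T)] {β : AddCircle T}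
    (hβ : addOrderOf β = 0) (g : C(AddCircle T, ℂ)) :
    HasSublinearBirkhoffOscillation (· + β) g := by
  have hspan : Submodule.span ℂ (Set.range fourier) ≤
      sublinearBirkhoffOscillationSubmodule ℂ (· + β) :=
    Submodule.span_le.2 <| Set.range_subset_iff.2 (hasSublinearBirkhoffOscillation_fourier hβ ·)
  have hclosure := Submodule.topologicalClosure_minimal _ hspan
    (isClosed_sublinearBirkhoffOscillationSubmodule _)
  rw [span_fourier_closure_eq_top] at hclosure
  exact hclosure (Submodule.mem_top (x := g))

end Rotation

section Sawtooth

/-- Up to the factor `-2`, an antiderivative of the sawtooth `fract x - 1/2`; unlike the sawtooth,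
it is continuous on the circle. -/
noncomputable def fractPotential (x : ℝ) : ℝ := Int.fract x * (1 - Int.fract x)

lemma norm_coe_mul_one_sub_norm_coe (x : ℝ) :
    ‖(x : UnitAddCircle)‖ * (1 - ‖(x : UnitAddCircle)‖) = fractPotential x := by
  rw [UnitAddCircle.norm_eq, abs_sub_round_eq_min, fractPotential]
  rcases min_cases (Int.fract x) (1 - Int.fract x) with ⟨h, -⟩ | ⟨h, -⟩
  · rw [h]
  · rw [h]; ring

lemma fract_add_eq_or {η : ℝ} (hη₀ : 0 ≤ η) (hη₁ : η < 1) (a : ℝ) :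
    Int.fract (a + η) = Int.fract a + η ∨ Int.fract (a + η) = Int.fract a + η - 1 := by
  have h₀ := Int.fract_nonneg a
  have h₁ := Int.fract_lt_one a
  rcases lt_or_ge (Int.fract a + η) 1 with h | h
  · refine .inl <| Int.fract_eq_iff.2 ⟨by linarith, h, ⌊a⌋, ?_⟩
    rw [← Int.self_sub_fract a]; ring
  · refine .inr <| Int.fract_eq_iff.2 ⟨by linarith, by linarith, ⌊a⌋ + 1, ?_⟩
    push_cast
    rw [← Int.self_sub_fract a]; ring

lemma fractPotential_sub_le {η : ℝ} (hη₀ : 0 ≤ η) (hη₁ : η < 1) (a : ℝ) :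
    fractPotential a - fractPotential (a + η) - η ^ 2 ≤ 2 * η * (Int.fract a - 1 / 2) := by
  have := Int.fract_nonneg (a + η)
  unfold fractPotential
  rcases fract_add_eq_or hη₀ hη₁ a with h | h <;> rw [h] at this ⊢ <;> linarith

lemma le_fractPotential_sub {η : ℝ} (hη₀ : 0 ≤ η) (hη₁ : η < 1) (a : ℝ) :
    2 * η * (Int.fract (a + η) - 1 / 2) ≤ fractPotential a - fractPotential (a + η) + η ^ 2 := by
  have := Int.fract_lt_one a
  unfold fractPotential
  rcases fract_add_eq_or hη₀ hη₁ a with h | h <;> rw [h] <;> linarith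

lemma addOrderOf_coe_eq_zero {β : ℝ} (hβ : Irrational β) : addOrderOf (β : UnitAddCircle) = 0 :=
  AddCircle.denseRange_zsmul_iff.1 <| AddCircle.denseRange_zsmul_coe_iff.2 <| by simpa using hβ

lemma birkhoffSum_add_coe_fractPotential (β c : ℝ) (n : ℕ) :
    birkhoffSum (· + (β : UnitAddCircle)) (fun x ↦ ((‖x‖ * (1 - ‖x‖) : ℝ) : ℂ)) n c =
      ((∑ j ∈ range n, fractPotential (c + j * β) : ℝ) : ℂ) := by
  simp only [birkhoffSum, add_right_iterate_apply, Complex.ofReal_sum]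
  refine sum_congr rfl fun j _ ↦ ?_
  rw [← norm_coe_mul_one_sub_norm_coe]
  simp

theorem abs_sum_fract_sub_half_le {β : ℝ} (hβ : Irrational β) {ε : ℝ} (hε : 0 < ε) :
    ∀ᶠ n : ℕ in atTop, ∀ c : ℝ, |∑ j ∈ range n, (Int.fract (c + j * β) - 1 / 2)| ≤ ε * n := by
  set η := min ε (1 / 2)
  have hη₀ : 0 < η := by positivity
  have hη₁ : η < 1 := (min_le_right _ _).trans_lt (by norm_num)
  let potential : C(UnitAddCircle, ℂ) := ⟨fun x ↦ ((‖x‖ * (1 - ‖x‖) : ℝ) : ℂ), by fun_prop⟩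
  filter_upwards [hasSublinearBirkhoffOscillation_rotation (addOrderOf_coe_eq_zero hβ) potential
    (η ^ 2) (by positivity)] with n hn c
  have hP : ∀ c c' : ℝ, |∑ j ∈ range n, fractPotential (c + j * β) -
      ∑ j ∈ range n, fractPotential (c' + j * β)| ≤ η ^ 2 * n := fun c c' ↦ by
    have h := hn c c'
    rwa [show ⇑potential = fun x ↦ ((‖x‖ * (1 - ‖x‖) : ℝ) : ℂ) from rfl,
      birkhoffSum_add_coe_fractPotential, birkhoffSum_add_coe_fractPotential, dist_eq_norm,
      ← Complex.ofReal_sub, Complex.norm_real, Real.norm_eq_abs] at h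
  have hconst : η ^ 2 * n = ∑ _j ∈ range n, η ^ 2 := by simp [mul_comm]
  have hlower : ∑ j ∈ range n, fractPotential (c + j * β) -
      ∑ j ∈ range n, fractPotential (c + η + j * β) - η ^ 2 * n ≤
      2 * η * ∑ j ∈ range n, (Int.fract (c + j * β) - 1 / 2) := by
    rw [hconst, mul_sum, ← sum_sub_distrib, ← sum_sub_distrib]
    refine sum_le_sum fun j _ ↦ ?_
    rw [add_right_comm]
    exact fractPotential_sub_le hη₀.le hη₁ _
  have hupper : 2 * η * ∑ j ∈ range n, (Int.fract (c + j * β) - 1 / 2) ≤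
      ∑ j ∈ range n, fractPotential (c - η + j * β) -
      ∑ j ∈ range n, fractPotential (c + j * β) + η ^ 2 * n := by
    rw [hconst, mul_sum, ← sum_sub_distrib, ← sum_add_distrib]
    refine sum_le_sum fun j _ ↦ ?_
    have h := le_fractPotential_sub hη₀.le hη₁ (c + j * β - η)
    rwa [sub_add_cancel, ← sub_add_eq_add_sub] at h
  have h₁ := abs_le.1 (hP c (c + η))
  have h₂ := abs_le.1 (hP (c - η) c)
  calc _ ≤ η * n := abs_le.2 ⟨by nlinarith, by nlinarith⟩
    _ ≤ ε * n := by gcongr; exact min_le_left _ _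

end Sawtooth

lemma deltaStar_eq {β : ℝ} (hβ : β ≠ 0) (n : ℤ) :
    deltaStar β n = -(Int.fract (β * n + 1 / 2) - 1 / 2) / β := by
  have h₀ := Int.fract_nonneg (β * n)
  have h₁ := Int.fract_lt_one (β * n)
  have h₂ := Int.fract_nonneg (β * n + 1 / 2)
  have h₃ := Int.fract_lt_one (β * n + 1 / 2)
  have hfloor := Int.self_sub_floor (β * n)
  rw [deltaStar, eq_div_iff hβ]
  rcases fract_add_eq_or (η := 1 / 2) (by norm_num) (by norm_num) (β * n) with h | h <;>
    rw [h] <;> split_ifs <;> rw [sub_mul, div_mul_cancel₀ _ hβ] <;> linarith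

lemma sum_deltaStar_Icc {β : ℝ} (hβ : β ≠ 0) (m : ℤ) (N : ℕ) :
    ∑ n ∈ Icc (m * N + 1) ((m + 1) * N), deltaStar β n =
      -(∑ j ∈ range N, (Int.fract (β * (m * N + 1) + 1 / 2 + j * β) - 1 / 2)) / β := by
  have hcard : ((m + 1) * N + 1 - (m * N + 1)).toNat = N := by
    rw [show (m + 1) * (N : ℤ) + 1 - (m * N + 1) = N by ring, Int.toNat_natCast]
  rw [Int.Icc_eq_finset_map, sum_map, hcard, ← sum_neg_distrib, sum_div]
  refine sum_congr rfl fun j _ ↦ ?_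
  simp only [Function.Embedding.trans_apply, Nat.castEmbedding_apply, addLeftEmbedding_apply,
    deltaStar_eq hβ]
  push_cast
  ring_nf

/-- For irrational `β`, the block averages of `δ*ₙ` tend to zero uniformly:
for every `ε > 0` there is `N₀` such that for all integers `m` and all `N > N₀`,
`|(1/N)·∑_{n=mN+1}^{(m+1)N} δ*ₙ| < ε`. -/
theorem stmt_12 (β : ℝ) (hβpos : 0 < β) (hβirr : Irrational β) :
    ∀ ε : ℝ, 0 < ε → ∃ N₀ : ℕ, ∀ m : ℤ, ∀ N : ℕ, N₀ < N →
      |(1 / (N : ℝ)) *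
        ∑ n ∈ Finset.Icc (m * (N : ℤ) + 1) ((m + 1) * (N : ℤ)), deltaStar β n| < ε := by
  intro ε hε
  obtain ⟨N₀, hN₀⟩ := eventually_atTop.1 (abs_sum_fract_sub_half_le hβirr (ε := ε * β / 2)
    (by positivity))
  refine ⟨N₀, fun m N hN ↦ ?_⟩
  have hNpos : (0 : ℝ) < N := by exact_mod_cast N₀.zero_le.trans_lt hN
  rw [sum_deltaStar_Icc hβpos.ne', neg_div, mul_neg, abs_neg, abs_mul,
    abs_of_pos (by positivity : (0 : ℝ) < 1 / N), abs_div, abs_of_pos hβpos]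
  calc _ ≤ 1 / (N : ℝ) * (ε * β / 2 * N / β) := by gcongr; exact hN₀ N hN.le _
    _ = ε / 2 := by field_simp
    _ < ε := half_lt_self hε
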